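/- Let $k$ be an algebraically closed field, $R$ a $k$-algebra, and $X$, $Y$ left $R$-modules. Assume: (i) the endomorphism ring $\mathrm{End}_R(X)$ is commutative; (ii) $\mathrm{End}_R(X)$ is not spanned over $k$ by the identity (equivalently, its $k$-dimension is not $\le 1$); (iii) for every nonzero $R$-linear map $\varphi \colon X \to Y$ and every nonzero $T \in \mathrm{End}_R(X)$, the composite $\varphi \circ T$ is nonzero. Then for every $R$-submodule $\pi \subseteq Y$ such that $\mathrm{Hom}_R(X, \pi)$ is finite-dimensional as a $k$-vector space, one has $\mathrm{Hom}_R(X, \pi) = 0$. (This is the module-theoretic core of the paper's main theorem: with $X = \mathrm{ind}_K^G \sigma_1$, $Y = \mathrm{ind}_K^G \sigma$, hypothesis (i) is Herzig's commutativity of the spherical Hecke algebra, hypothesis (iii) is Herzig's injectivity of right composition with Hecke operators, and the finite-dimensionality of $\mathrm{Hom}_R(X,\pi)$ comes from admissibility of $\pi$; the conclusion shows $\mathrm{ind}_K^G\sigma$ has no irreducible admissible subrepresentation.) -/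

import Mathlib

/-! If `θ : X → π` were nonzero, then `T ↦ θ ∘ T` would embed `End_R X` into the
finite-dimensional space `Hom_R(X, π)`, and the injectivity hypothesis makes `End_R X` a domain.
A finite-dimensional domain over an algebraically closed field is the field itself,
contradicting that `End_R X` is larger than `k`. -/

section

variable {R X Y : Type*} [Ring R] [AddCommGroup X] [Module R X] [AddCommGroup Y] [Module R Y]

theorem LinearMap.comp_left_injective_of_comp_ne_zero
    (hinj : ∀ φ : X →ₗ[R] Y, φ ≠ 0 → ∀ T : Module.End R X, T ≠ 0 → φ ∘ₗ T ≠ 0)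
    {φ : X →ₗ[R] Y} (hφ : φ ≠ 0) :
    Function.Injective fun T : Module.End R X => φ ∘ₗ T := by
  intro S T hST
  by_contra hne
  exact hinj φ hφ (S - T) (sub_ne_zero.2 hne) (by rw [LinearMap.comp_sub, sub_eq_zero]; exact hST)

theorem Module.End.isDomain_of_comp_ne_zero
    (hinj : ∀ φ : X →ₗ[R] Y, φ ≠ 0 → ∀ T : Module.End R X, T ≠ 0 → φ ∘ₗ T ≠ 0)
    {φ : X →ₗ[R] Y} (hφ : φ ≠ 0) :
    IsDomain (Module.End R X) := by
  have : Nontrivial (Module.End R X) := by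
    refine ⟨⟨1, 0, fun h => hφ ?_⟩⟩
    rw [← LinearMap.comp_id φ, ← Module.End.one_eq_id, h, LinearMap.comp_zero]
  have : NoZeroDivisors (Module.End R X) := by
    refine ⟨fun {S T} hST => or_iff_not_imp_left.2 fun hS => ?_⟩
    by_contra hT
    exact hinj _ (hinj φ hφ S hS) T hT <| by
      rw [LinearMap.comp_assoc, ← Module.End.mul_eq_comp, hST, LinearMap.comp_zero]
  exact NoZeroDivisors.to_isDomain _

end

theorem stmt0_general (k : Type*) [Field k] [IsAlgClosed k]
    (R : Type*) [Ring R] [Algebra k R]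
    (X : Type*) [AddCommGroup X] [Module k X] [Module R X] [IsScalarTower k R X]
    (Y : Type*) [AddCommGroup Y] [Module k Y] [Module R Y] [IsScalarTower k R Y]
    (hbig : ¬ ∀ S : Module.End R X, ∃ c : k, S = c • (1 : Module.End R X))
    (hinj : ∀ φ : X →ₗ[R] Y, φ ≠ 0 → ∀ T : Module.End R X, T ≠ 0 →
      φ.comp (T : X →ₗ[R] X) ≠ 0) :
    ∀ π : Submodule R Y, FiniteDimensional k (X →ₗ[R] π) →
      ∀ θ : X →ₗ[R] π, θ = 0 := by
  intro π hfd θ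
  by_contra hθ
  have hφ : π.subtype ∘ₗ θ ≠ 0 := fun h =>
    hθ (LinearMap.ext fun x => Subtype.ext (LinearMap.congr_fun h x))
  have := Module.End.isDomain_of_comp_ne_zero hinj hφ
  have : FiniteDimensional k (Module.End R X) :=
    FiniteDimensional.of_injective (LinearMap.compRight k θ) fun S T hST =>
      LinearMap.comp_left_injective_of_comp_ne_zero hinj hφ <| by
        simp only [LinearMap.comp_assoc]
        exact congrArg (π.subtype ∘ₗ ·) hST
  refine hbig fun S => ?_
  obtain ⟨c, rfl⟩ := (IsAlgClosed.algebraMap_bijective_of_isIntegral (k := k)).2 S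
  exact ⟨c, Algebra.algebraMap_eq_smul_one c⟩

/-- Module-theoretic core of the paper's main theorem: if `End_R X` is commutative,
not spanned over `k` by the identity, and right composition with any nonzero
endomorphism of `X` is injective on nonzero maps `X → Y`, then for any submodule
`π ⊆ Y` with `Hom_R(X, π)` finite-dimensional over `k`, we have `Hom_R(X, π) = 0`. -/
theorem stmt0 (k : Type*) [Field k] [IsAlgClosed k]
    (R : Type*) [Ring R] [Algebra k R]
    (X : Type*) [AddCommGroup X] [Module k X] [Module R X] [IsScalarTower k R X]
    (Y : Type*) [AddCommGroup Y] [Module k Y] [Module R Y] [IsScalarTower k R Y]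
    (hcomm : ∀ S T : Module.End R X, S * T = T * S)
    (hbig : ¬ ∀ S : Module.End R X, ∃ c : k, S = c • (1 : Module.End R X))
    (hinj : ∀ φ : X →ₗ[R] Y, φ ≠ 0 → ∀ T : Module.End R X, T ≠ 0 →
      φ.comp (T : X →ₗ[R] X) ≠ 0) :
    ∀ π : Submodule R Y, FiniteDimensional k (X →ₗ[R] π) →
      ∀ θ : X →ₗ[R] π, θ = 0 :=
  stmt0_general k R X Y hbig hinj
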